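/- Let 0 < s < 1. There exist constants c > 0 and C > 0 such that for every integer n ≥ 2 one has c · n^s ≤ λ_n ≤ C · n^s. -/

import Mathlib

open Real MeasureTheory Finset

/-- The eigenvalues `λ_n` of the linearized radially symmetric non-cutoff Boltzmann operator
with Maxwellian molecules, for the model angular kernel `β(θ) = (sin θ)^{-1-2s} cos θ`. -/
noncomputable def boltzLam (s : ℝ) (n : ℕ) : ℝ :=
  ∫ θ in (0:ℝ)..(Real.pi / 4),
    Real.sin θ ^ (-1 - 2 * s) * Real.cos θ *
      (1 - Real.cos θ ^ (2 * n) - Real.sin θ ^ (2 * n))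

/-!
Substituting `t = sin² θ` gives `λ_n = ½ ∫₀^{1/2} t^{-1-s} φ_n(t) dt` with
`φ_n(t) = 1 - (1 - t)^n - t^n`. On `[0, 1/2]` we have `0 ≤ φ_n ≤ min (n t) 1`, and
`φ_n(t) ≥ n t / 4` once `t ≤ 1/n`. Splitting the integral at `t = 1/n`, the part over `[0, 1/n]`
is comparable to `n ∫₀^{1/n} t^{-s} dt = n^s / (1 - s)`, while the part over `[1/n, 1/2]` is
nonnegative and at most `∫_{1/n}^∞ t^{-1-s} dt = n^s / s`.
-/

open Set intervalIntegral

def boltzPhi (n : ℕ) (t : ℝ) : ℝ := 1 - (1 - t) ^ n - t ^ n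

section boltzPhi

variable {n : ℕ} {t : ℝ}

theorem boltzPhi_nonneg (hn : 2 ≤ n) (ht₀ : 0 ≤ t) (ht₁ : t ≤ 1) : 0 ≤ boltzPhi n t := by
  have h₁ : (1 - t) ^ n ≤ (1 - t) ^ 2 := pow_le_pow_of_le_one (by linarith) (by linarith) hn
  have h₂ : t ^ n ≤ t ^ 2 := pow_le_pow_of_le_one ht₀ ht₁ hn
  unfold boltzPhi
  nlinarith

theorem boltzPhi_le_one (ht₀ : 0 ≤ t) (ht₁ : t ≤ 1) : boltzPhi n t ≤ 1 := by
  have := pow_nonneg (sub_nonneg.2 ht₁) n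
  have := pow_nonneg ht₀ n
  unfold boltzPhi
  linarith

theorem boltzPhi_le_mul (ht₀ : 0 ≤ t) (ht₂ : t ≤ 2) : boltzPhi n t ≤ n * t := by
  have bernoulli : 1 + n * (-t) ≤ (1 + -t) ^ n := one_add_mul_le_pow (by linarith) n
  have := pow_nonneg ht₀ n
  rw [← sub_eq_add_neg] at bernoulli
  unfold boltzPhi
  linarith

/-- Bernoulli's inequality for `(1 + t)^n` and `(1 - t)^n (1 + t)^n = (1 - t^2)^n ≤ 1` give
`(1 - t)^n ≤ 1 / (1 + n t)`. -/
theorem mul_div_four_le_boltzPhi (hn : 2 ≤ n) (ht₀ : 0 ≤ t) (ht : t ≤ 1 / 2)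
    (hnt : n * t ≤ 1) : n * t / 4 ≤ boltzPhi n t := by
  have hpow : 0 ≤ (1 - t) ^ n := pow_nonneg (by linarith) n
  have key : (1 - t) ^ n * (1 + n * t) ≤ 1 :=
    calc (1 - t) ^ n * (1 + n * t) ≤ (1 - t) ^ n * (1 + t) ^ n :=
          mul_le_mul_of_nonneg_left (one_add_mul_le_pow (by linarith) n) hpow
      _ = (1 - t ^ 2) ^ n := by rw [← mul_pow]; ring
      _ ≤ 1 := pow_le_one₀ (by nlinarith) (by nlinarith)
  have htn : t ^ n ≤ t ^ 2 := pow_le_pow_of_le_one ht₀ (by linarith) hn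
  have hn2 : (2 : ℝ) ≤ n := by exact_mod_cast hn
  unfold boltzPhi
  nlinarith [mul_nonneg hpow (mul_nonneg (Nat.cast_nonneg (α := ℝ) n) ht₀)]

end boltzPhi

theorem sin_sq_image_Ioc_zero_pi_div_four :
    (fun θ ↦ sin θ ^ 2) '' Set.Ioc 0 (π / 4) = Set.Ioc 0 (1 / 2) := by
  have hpi := pi_pos
  have hquarter : sin (π / 4) ^ 2 = 1 / 2 := by
    rw [sin_pi_div_four, div_pow, sq_sqrt zero_le_two]; norm_num
  ext t
  constructor
  · rintro ⟨θ, ⟨hθ₀, hθ⟩, rfl⟩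
    have hsin : 0 < sin θ := sin_pos_of_pos_of_lt_pi hθ₀ (by linarith)
    have hle : sin θ ≤ sin (π / 4) :=
      strictMonoOn_sin.monotoneOn ⟨by linarith, by linarith⟩ ⟨by linarith, by linarith⟩ hθ
    exact ⟨by positivity, hquarter ▸ pow_le_pow_left₀ hsin.le hle 2⟩
  · rintro ⟨ht₀, ht⟩
    have hsqrt : √t ≤ sin (π / 4) :=
      (sqrt_le_left (sin_nonneg_of_nonneg_of_le_pi (by linarith) (by linarith))).2 (hquarter ▸ ht)
    refine ⟨arcsin √t, ⟨arcsin_pos.2 (sqrt_pos.2 ht₀), ?_⟩, ?_⟩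
    · calc arcsin √t ≤ arcsin (sin (π / 4)) := monotone_arcsin hsqrt
        _ = π / 4 := arcsin_sin (by linarith) (by linarith)
    · simp only [sin_arcsin (by linarith [sqrt_nonneg t]) (hsqrt.trans (sin_le_one _)),
        sq_sqrt ht₀.le]

theorem injOn_sin_sq_Icc : InjOn (fun θ ↦ sin θ ^ 2) (Icc 0 (π / 2)) := fun x hx y hy h ↦
  injOn_sin ⟨by linarith [hx.1, pi_pos], hx.2⟩ ⟨by linarith [hy.1, pi_pos], hy.2⟩ <|
    (pow_left_inj₀ (sin_nonneg_of_nonneg_of_le_pi hx.1 (by linarith [hx.2, pi_pos]))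
      (sin_nonneg_of_nonneg_of_le_pi hy.1 (by linarith [hy.2, pi_pos])) two_ne_zero).1 h

theorem boltzLam_eq_half_integral (s : ℝ) (n : ℕ) :
    boltzLam s n = 1 / 2 * ∫ t in (0 : ℝ)..1 / 2, t ^ (-1 - s) * boltzPhi n t := by
  have hpi := pi_pos
  rw [boltzLam, intervalIntegral.integral_of_le (by positivity),
    intervalIntegral.integral_of_le (by norm_num), ← sin_sq_image_Ioc_zero_pi_div_four,
    integral_image_eq_integral_abs_deriv_smul (f := fun θ ↦ sin θ ^ 2) measurableSet_Ioc
      (fun θ _ ↦ ((hasDerivAt_sin θ).pow 2).hasDerivWithinAt)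
      (injOn_sin_sq_Icc.mono (Ioc_subset_Icc_self.trans (Icc_subset_Icc_right (by linarith)))),
    ← MeasureTheory.integral_const_mul]
  refine setIntegral_congr_fun measurableSet_Ioc fun θ hθ ↦ ?_
  obtain ⟨hθ₀, hθ⟩ := hθ
  have hsin : 0 < sin θ := sin_pos_of_pos_of_lt_pi hθ₀ (by linarith)
  have hcos : 0 < cos θ := cos_pos_of_mem_Ioo ⟨by linarith, by linarith⟩
  have hrpow : (sin θ ^ 2) ^ (-1 - s) * sin θ = sin θ ^ (-1 - 2 * s) := by
    rw [← rpow_natCast, ← rpow_mul hsin.le, ← rpow_add_one hsin.ne']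
    push_cast; ring_nf
  have hphi : boltzPhi n (sin θ ^ 2) = 1 - cos θ ^ (2 * n) - sin θ ^ (2 * n) := by
    rw [boltzPhi, ← cos_sq', pow_mul, pow_mul]
  rw [hphi, ← hrpow, smul_eq_mul, abs_of_pos (by positivity)]
  push_cast
  ring

section rpow

variable {s x : ℝ}

theorem rpow_neg_one_sub_mul_self (hx : 0 < x) : x ^ (-1 - s) * x = x ^ (-s) := by
  rw [← rpow_add_one hx.ne']; ring_nf

theorem integral_zero_inv_mul_rpow_neg (hs₁ : s < 1) (hx : 0 < x) :
    ∫ t in (0 : ℝ)..x⁻¹, x * t ^ (-s) = x ^ s / (1 - s) := by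
  rw [intervalIntegral.integral_const_mul, integral_rpow (Or.inl (by linarith)),
    zero_rpow (by linarith), sub_zero, neg_add_eq_sub, inv_rpow hx.le, ← mul_div_assoc,
    ← rpow_neg hx.le, mul_comm, ← rpow_add_one hx.ne']
  ring_nf

theorem integral_inv_rpow_neg_one_sub_le (hs : 0 < s) (hx : 0 < x) {b : ℝ} (hb : 0 < b) :
    ∫ t in x⁻¹..b, t ^ (-1 - s) ≤ x ^ s / s := by
  have hbs := rpow_pos_of_pos hb (-s)
  rw [integral_rpow (Or.inr ⟨by linarith, notMem_uIcc_of_lt (inv_pos.2 hx) hb⟩),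
    show -1 - s + 1 = -s by ring, inv_rpow hx.le, rpow_neg hx.le, inv_inv, div_neg, ← neg_div,
    neg_sub]
  exact div_le_div_of_nonneg_right (by linarith) hs.le

end rpow

section integrand

variable {s t : ℝ} {n : ℕ}

theorem rpow_mul_boltzPhi_le_mul_rpow (ht₀ : 0 < t) (ht₂ : t ≤ 2) :
    t ^ (-1 - s) * boltzPhi n t ≤ n * t ^ (-s) :=
  calc t ^ (-1 - s) * boltzPhi n t ≤ t ^ (-1 - s) * (n * t) :=
        mul_le_mul_of_nonneg_left (boltzPhi_le_mul ht₀.le ht₂) (rpow_nonneg ht₀.le _)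
    _ = n * t ^ (-s) := by rw [← rpow_neg_one_sub_mul_self ht₀]; ring

theorem mul_rpow_div_four_le_rpow_mul_boltzPhi (hn : 2 ≤ n) (ht₀ : 0 < t) (ht : t ≤ 1 / 2)
    (hnt : n * t ≤ 1) : n * t ^ (-s) / 4 ≤ t ^ (-1 - s) * boltzPhi n t :=
  calc n * t ^ (-s) / 4 = t ^ (-1 - s) * (n * t / 4) := by
        rw [← rpow_neg_one_sub_mul_self ht₀]; ring
    _ ≤ t ^ (-1 - s) * boltzPhi n t :=
        mul_le_mul_of_nonneg_left (mul_div_four_le_boltzPhi hn ht₀.le ht hnt) (rpow_nonneg ht₀.le _)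

theorem intervalIntegrable_rpow_mul_boltzPhi (hs₁ : s < 1) (hn : 2 ≤ n) {b : ℝ} (hb₀ : 0 ≤ b)
    (hb₁ : b ≤ 1) : IntervalIntegrable (fun t ↦ t ^ (-1 - s) * boltzPhi n t) volume 0 b := by
  refine ((intervalIntegrable_rpow' (r := -s) (by linarith)).const_mul
    (n : ℝ)).mono_fun' (by unfold boltzPhi; fun_prop) ?_
  rw [uIoc_of_le hb₀]
  filter_upwards [ae_restrict_mem measurableSet_Ioc] with t ⟨ht₀, ht⟩
  rw [norm_of_nonneg (mul_nonneg (rpow_nonneg ht₀.le _) (boltzPhi_nonneg hn ht₀.le (by linarith)))]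
  exact rpow_mul_boltzPhi_le_mul_rpow ht₀ (by linarith)

end integrand

section bounds

variable {s : ℝ} {n : ℕ}

theorem le_integral_rpow_mul_boltzPhi (hs₁ : s < 1) (hn : 2 ≤ n) :
    n ^ s / (1 - s) / 4 ≤ ∫ t in (0 : ℝ)..1 / 2, t ^ (-1 - s) * boltzPhi n t := by
  have hn₀ : (0 : ℝ) < n := by positivity
  have hinv : (n : ℝ)⁻¹ ≤ 1 / 2 := by
    rw [one_div]; exact inv_anti₀ two_pos (by exact_mod_cast hn)
  have hhead := intervalIntegrable_rpow_mul_boltzPhi hs₁ hn (inv_pos.2 hn₀).le (by linarith)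
  have hall := intervalIntegrable_rpow_mul_boltzPhi hs₁ hn (s := s) one_half_pos.le (by norm_num)
  rw [← integral_add_adjacent_intervals hhead (hhead.symm.trans hall)]
  have head : n ^ s / (1 - s) / 4 ≤ ∫ t in (0 : ℝ)..(n : ℝ)⁻¹, t ^ (-1 - s) * boltzPhi n t :=
    calc n ^ s / (1 - s) / 4 = ∫ t in (0 : ℝ)..(n : ℝ)⁻¹, n * t ^ (-s) / 4 := by
          rw [intervalIntegral.integral_div, integral_zero_inv_mul_rpow_neg hs₁ hn₀]
      _ ≤ _ := by
        refine integral_mono_on_of_le_Ioo (inv_pos.2 hn₀).le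
          (((intervalIntegrable_rpow' (by linarith)).const_mul _).div_const _)
          hhead fun t ⟨ht₀, ht⟩ ↦ mul_rpow_div_four_le_rpow_mul_boltzPhi hn ht₀ (by linarith) ?_
        nlinarith [mul_inv_cancel₀ hn₀.ne']
  have tail : 0 ≤ ∫ t in (n : ℝ)⁻¹..1 / 2, t ^ (-1 - s) * boltzPhi n t :=
    integral_nonneg hinv fun t ⟨htn, ht⟩ ↦
      have ht₀ : 0 ≤ t := (inv_pos.2 hn₀).le.trans htn
      mul_nonneg (rpow_nonneg ht₀ _) (boltzPhi_nonneg hn ht₀ (by linarith))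
  linarith

theorem integral_rpow_mul_boltzPhi_le (hs : 0 < s) (hs₁ : s < 1) (hn : 2 ≤ n) :
    ∫ t in (0 : ℝ)..1 / 2, t ^ (-1 - s) * boltzPhi n t ≤ n ^ s / (1 - s) + n ^ s / s := by
  have hn₀ : (0 : ℝ) < n := by positivity
  have hinv : (n : ℝ)⁻¹ ≤ 1 / 2 := by
    rw [one_div]; exact inv_anti₀ two_pos (by exact_mod_cast hn)
  have hhead := intervalIntegrable_rpow_mul_boltzPhi hs₁ hn (inv_pos.2 hn₀).le (by linarith)
  have hall := intervalIntegrable_rpow_mul_boltzPhi hs₁ hn (s := s) one_half_pos.le (by norm_num)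
  rw [← integral_add_adjacent_intervals hhead (hhead.symm.trans hall)]
  have head : ∫ t in (0 : ℝ)..(n : ℝ)⁻¹, t ^ (-1 - s) * boltzPhi n t ≤ n ^ s / (1 - s) :=
    integral_zero_inv_mul_rpow_neg hs₁ hn₀ ▸ integral_mono_on_of_le_Ioo (inv_pos.2 hn₀).le hhead
      ((intervalIntegrable_rpow' (by linarith)).const_mul _)
      fun t ⟨ht₀, ht⟩ ↦ rpow_mul_boltzPhi_le_mul_rpow ht₀ (by linarith)
  have tail : ∫ t in (n : ℝ)⁻¹..1 / 2, t ^ (-1 - s) * boltzPhi n t ≤ n ^ s / s := by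
    refine (integral_mono_on_of_le_Ioo hinv (hhead.symm.trans hall)
      (intervalIntegrable_rpow (Or.inr (notMem_uIcc_of_lt (inv_pos.2 hn₀) one_half_pos)))
      fun t ⟨ht₀, ht⟩ ↦ ?_).trans (integral_inv_rpow_neg_one_sub_le hs hn₀ one_half_pos)
    have ht₀' : 0 < t := (inv_pos.2 hn₀).trans ht₀
    exact mul_le_of_le_one_right (rpow_nonneg ht₀'.le _) (boltzPhi_le_one ht₀'.le (by linarith))
  linarith

end bounds

theorem lam_asymptotics (s : ℝ) (hs : 0 < s) (hs1 : s < 1) :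
    ∃ c > 0, ∃ C > 0, ∀ n : ℕ, 2 ≤ n →
      c * (n : ℝ) ^ s ≤ boltzLam s n ∧ boltzLam s n ≤ C * (n : ℝ) ^ s := by
  have hs₁ : 0 < 1 - s := sub_pos.2 hs1
  refine ⟨1 / (1 - s) / 8, by positivity, (1 / (1 - s) + 1 / s) / 2, by positivity,
    fun n hn ↦ ?_⟩
  rw [boltzLam_eq_half_integral]
  have lower := le_integral_rpow_mul_boltzPhi hs1 hn
  have upper := integral_rpow_mul_boltzPhi_le hs hs1 hn
  constructor
  · calc 1 / (1 - s) / 8 * (n : ℝ) ^ s = 1 / 2 * ((n : ℝ) ^ s / (1 - s) / 4) := by ring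
      _ ≤ _ := by gcongr
  · calc _ ≤ 1 / 2 * ((n : ℝ) ^ s / (1 - s) + n ^ s / s) := by gcongr
      _ = _ := by ring
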